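/- Let π : A → B be a G-injective equivariant embedding and φ : A → C any G-equivariant injective *-homomorphism. Then for every a in the algebraic crossed product C_c(G,A), the norm of a in B⋊_max G (via π) is at most the norm of a in C⋊_max G (via φ). Consequently, the completion of C_c(G,A) inside B⋊_max G realizes the injective crossed product norm ‖a‖_inj = inf over all equivariant embeddings ι : A → D of ‖(ι⋊G)(a)‖_{D⋊_max G}. -/

import Mathlib

open Function

/-- A point-norm continuous action of a topological group `G` on a (non-unital) C⋆-algebra `A`
by ⋆-automorphisms. -/
structure GAct (G : Type) [Monoid G] [TopologicalSpace G]
    (A : Type) [NonUnitalCStarAlgebra A] : Type where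
  act : G → A → A
  act_one : ∀ a, act 1 a = a
  act_mul : ∀ g h a, act (g * h) a = act g (act h a)
  map_add : ∀ g a b, act g (a + b) = act g a + act g b
  map_smul : ∀ g (c : ℂ) a, act g (c • a) = c • act g a
  map_mul : ∀ g a b, act g (a * b) = act g a * act g b
  map_star : ∀ g a, act g (star a) = star (act g a)
  isometry : ∀ g a, ‖act g a‖ = ‖a‖
  cont : ∀ a, Continuous fun g => act g a

section maps

variable {G : Type} [Monoid G] [TopologicalSpace G]
variable {A B : Type} [NonUnitalCStarAlgebra A] [NonUnitalCStarAlgebra B]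

/-- A contractive completely positive (ccp) map between C⋆-algebras:
linear, contractive, and positive at all matrix levels (where an element of a
C⋆-algebra is positive iff it is of the form `star y * y`). -/
def IsCcp (φ : A → B) : Prop :=
  (∀ a b, φ (a + b) = φ a + φ b) ∧ (∀ (c : ℂ) (a : A), φ (c • a) = c • φ a) ∧
  (∀ a, ‖φ a‖ ≤ ‖a‖) ∧
  ∀ (n : ℕ) (M : Matrix (Fin n) (Fin n) A),
    (∃ N : Matrix (Fin n) (Fin n) A, M = star N * N) →
      ∃ N' : Matrix (Fin n) (Fin n) B, M.map φ = star N' * N'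

/-- A ⋆-homomorphism, as a predicate on functions. -/
def IsStarHom (φ : A → B) : Prop :=
  (∀ a b, φ (a + b) = φ a + φ b) ∧ (∀ (c : ℂ) (a : A), φ (c • a) = c • φ a) ∧
  (∀ a b, φ (a * b) = φ a * φ b) ∧ (∀ a, φ (star a) = star (φ a))

/-- Equivariance of a map with respect to given actions. -/
def Equivariant (α : GAct G A) (β : GAct G B) (φ : A → B) : Prop :=
  ∀ g a, φ (α.act g a) = β.act g (φ a)

/-- A `G`-equivariant injective ⋆-homomorphism (an equivariant embedding). -/
def IsGEmbedding (α : GAct G A) (β : GAct G B) (φ : A → B) : Prop :=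
  IsStarHom φ ∧ Injective φ ∧ Equivariant α β φ

/-- A map `φ : A → B` is `G`-injective if it extends to an equivariant ccp map along every
equivariant embedding of `A` into another `G`-C⋆-algebra. -/
def GInjectiveMap (α : GAct G A) (β : GAct G B) (φ : A → B) : Prop :=
  ∀ (C : Type) (_ : NonUnitalCStarAlgebra C) (γ : GAct G C) (ι : A → C),
    IsGEmbedding α γ ι →
    ∃ ψ : C → B, IsCcp ψ ∧ Equivariant γ β ψ ∧ ψ ∘ ι = φ

/-- A `G`-C⋆-algebra `B` is `G`-injective if every equivariant ccp map into it is
`G`-injective. -/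
def GInjectiveAlg (β : GAct G B) : Prop :=
  ∀ (A' : Type) (_ : NonUnitalCStarAlgebra A') (α : GAct G A') (φ : A' → B),
    IsCcp φ → Equivariant α β φ → GInjectiveMap α β φ

/-- Membership in the algebraic crossed product `C_c(G,A)`: continuous compactly
supported `A`-valued functions on `G`. -/
def CcFun (f : G → A) : Prop :=
  Continuous f ∧ HasCompactSupport f

end maps

section norms

variable (G : Type) [Monoid G] [TopologicalSpace G]

/-- The type of assignments of a crossed-product norm (such as `‖·‖_max` or `‖·‖_r`) to every
`G`-C⋆-algebra; the norm is recorded as a function on all of `G → A`, thought of as restricted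
to `C_c(G,A)`. -/
abbrev CPNorm : Type 1 :=
  ∀ (A : Type) [_inst : NonUnitalCStarAlgebra A], GAct G A → (G → A) → ℝ

variable {G}

/-- Functoriality of a crossed-product norm assignment for equivariant ccp maps:
an equivariant ccp map `ψ` induces a contraction on crossed products.  This is the
characteristic property of the maximal crossed product (functoriality for ccp maps)
which is used throughout the construction of the maximal injective crossed product. -/
def CcpFunctorial (N : CPNorm G) : Prop :=
  ∀ (A : Type) (_ : NonUnitalCStarAlgebra A) (B : Type) (_ : NonUnitalCStarAlgebra B)
    (α : GAct G A) (β : GAct G B) (ψ : A → B), IsCcp ψ → Equivariant α β ψ →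
    ∀ f : G → A, CcFun f → N B β (ψ ∘ f) ≤ N A α f

/-- The injective crossed-product norm associated to a given (maximal) crossed-product
norm assignment: the infimum over all equivariant embeddings `ι : A → B` of the norm of
the image of `f ∈ C_c(G,A)` in `B ⋊_max G`. -/
noncomputable def injNorm (maxN : CPNorm G) (A : Type) [NonUnitalCStarAlgebra A]
    (α : GAct G A) (f : G → A) : ℝ :=
  sInf { r : ℝ | ∃ (B : Type) (_ : NonUnitalCStarAlgebra B) (β : GAct G B) (ι : A → B),
    IsGEmbedding α β ι ∧ r = maxN B β (ι ∘ f) }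

end norms

section development

open scoped CStarAlgebra

variable {G : Type} [TopologicalSpace G]
variable {A B : Type} [NonUnitalCStarAlgebra A] [NonUnitalCStarAlgebra B]

def IsStarHom.toNonUnitalStarAlgHom {ι : A → B} (h : IsStarHom ι) : A →⋆ₙₐ[ℂ] B where
  toFun := ι
  map_smul' := h.2.1
  map_zero' := by simpa using h.2.1 0 0
  map_add' := h.1
  map_mul' := h.2.2.1
  map_star' := h.2.2.2

-- ⋆-homomorphisms between C⋆-algebras are automatically contractive, hence continuous.
theorem IsStarHom.continuous {ι : A → B} (h : IsStarHom ι) : Continuous ι :=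
  map_continuous h.toNonUnitalStarAlgHom

theorem CcFun.comp_isStarHom {ι : A → B} (h : IsStarHom ι) {f : G → A} (hf : CcFun f) :
    CcFun (ι ∘ f) :=
  ⟨h.continuous.comp hf.1, hf.2.comp_left (map_zero h.toNonUnitalStarAlgHom)⟩

variable [Monoid G]

-- `π = ψ ∘ ι` for an equivariant ccp `ψ`, to which ccp-functoriality of `N` applies.
theorem GInjectiveMap.cpNorm_le_of_isGEmbedding {N : CPNorm G} (hN : CcpFunctorial N)
    {α : GAct G A} {β : GAct G B} {π : A → B} (hπ : GInjectiveMap α β π)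
    {D : Type} [NonUnitalCStarAlgebra D] {δ : GAct G D} {ι : A → D} (hι : IsGEmbedding α δ ι)
    {f : G → A} (hf : CcFun f) : N B β (π ∘ f) ≤ N D δ (ι ∘ f) := by
  obtain ⟨ψ, hψ, hψeq, hψι⟩ := hπ D _ δ ι hι
  simpa only [← comp_assoc, hψι] using hN D _ B _ δ β ψ hψ hψeq (ι ∘ f) (hf.comp_isStarHom hι.1)

theorem injNorm_eq_of_forall_le {N : CPNorm G} {α : GAct G A} {β : GAct G B} {π : A → B}
    (hπ : IsGEmbedding α β π) {f : G → A}
    (hle : ∀ (D : Type) [NonUnitalCStarAlgebra D] (δ : GAct G D) (ι : A → D),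
      IsGEmbedding α δ ι → N B β (π ∘ f) ≤ N D δ (ι ∘ f)) :
    injNorm N A α f = N B β (π ∘ f) := by
  refine IsLeast.csInf_eq ⟨⟨B, _, β, π, hπ, rfl⟩, ?_⟩
  rintro r ⟨D, _, δ, ι, hι, rfl⟩
  exact hle D δ ι hι

end development

theorem g_injective_embedding_realizes_injNorm_general
    {G : Type} [Group G] [TopologicalSpace G]
    (maxN : CPNorm G) (hmax : CcpFunctorial maxN)
    {A B C : Type} [NonUnitalCStarAlgebra A] [NonUnitalCStarAlgebra B]
    [NonUnitalCStarAlgebra C]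
    (α : GAct G A) (β : GAct G B) (γ : GAct G C)
    (π : A → B) (hπ : IsGEmbedding α β π) (hπinj : GInjectiveMap α β π)
    (φ : A → C) (hφ : IsGEmbedding α γ φ) :
    (∀ f : G → A, CcFun f → maxN B β (π ∘ f) ≤ maxN C γ (φ ∘ f)) ∧
    (∀ f : G → A, CcFun f → maxN B β (π ∘ f) = injNorm maxN A α f) :=
  ⟨fun _ hf => hπinj.cpNorm_le_of_isGEmbedding hmax hφ hf,
    fun _ hf => (injNorm_eq_of_forall_le hπ fun _ _ _ _ hι =>
      hπinj.cpNorm_le_of_isGEmbedding hmax hι hf).symm⟩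

/-- Let `π : A → B` be a `G`-injective equivariant embedding and
`φ : A → C` any equivariant embedding.  Then for every `a ∈ C_c(G,A)` the norm of `a` in
`B ⋊_max G` (via `π`) is at most its norm in `C ⋊_max G` (via `φ`); consequently the
completion of `C_c(G,A)` inside `B ⋊_max G` realizes the injective crossed-product norm
`‖a‖_inj = inf_ι ‖(ι ⋊ G)(a)‖`. -/
theorem g_injective_embedding_realizes_injNorm
    {G : Type} [Group G] [TopologicalSpace G] [IsTopologicalGroup G] [LocallyCompactSpace G]
    (maxN : CPNorm G) (hmax : CcpFunctorial maxN)
    {A B C : Type} [NonUnitalCStarAlgebra A] [NonUnitalCStarAlgebra B]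
    [NonUnitalCStarAlgebra C]
    (α : GAct G A) (β : GAct G B) (γ : GAct G C)
    (π : A → B) (hπ : IsGEmbedding α β π) (hπinj : GInjectiveMap α β π)
    (φ : A → C) (hφ : IsGEmbedding α γ φ) :
    (∀ f : G → A, CcFun f → maxN B β (π ∘ f) ≤ maxN C γ (φ ∘ f)) ∧
    (∀ f : G → A, CcFun f → maxN B β (π ∘ f) = injNorm maxN A α f) :=
  g_injective_embedding_realizes_injNorm_general maxN hmax α β γ π hπ hπinj φ hφ
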